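/- Suppose (y, r) → x → h is a Markov chain and r is independent of y. Then I(h; r) ≤ I(h; x) − I(h; y). -/

import Mathlib

open Finset

/-- Pushforward of a mass function `p` on a finite sample space along `f`. -/
noncomputable def pmap {Ω B : Type*} [Fintype Ω] [DecidableEq B] (p : Ω → ℝ) (f : Ω → B) : B → ℝ :=
  fun b => ∑ ω, if f ω = b then p ω else 0

/-- Shannon entropy of a mass function on a finite alphabet (natural log). -/
noncomputable def ent {A : Type*} [Fintype A] (p : A → ℝ) : ℝ :=
  ∑ a, -(p a * Real.log (p a))

/-- Mutual information `I(f ; g)` of two discrete random variables `f, g` on (Ω, p). -/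
noncomputable def MI {Ω A B : Type*} [Fintype Ω] [Fintype A] [Fintype B]
    [DecidableEq A] [DecidableEq B] (p : Ω → ℝ) (f : Ω → A) (g : Ω → B) : ℝ :=
  ent (pmap p f) + ent (pmap p g) - ent (pmap p (fun ω => (f ω, g ω)))

/-- Conditional entropy `H(f | g)`. -/
noncomputable def condEnt {Ω A B : Type*} [Fintype Ω] [Fintype A] [Fintype B]
    [DecidableEq A] [DecidableEq B] (p : Ω → ℝ) (f : Ω → A) (g : Ω → B) : ℝ :=
  ent (pmap p (fun ω => (f ω, g ω))) - ent (pmap p g)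

/-- Conditional mutual information `I(f ; g | k) = H(g | k) - H(g | f, k)`. -/
noncomputable def condMI {Ω A B C : Type*} [Fintype Ω] [Fintype A] [Fintype B] [Fintype C]
    [DecidableEq A] [DecidableEq B] [DecidableEq C]
    (p : Ω → ℝ) (f : Ω → A) (g : Ω → B) (k : Ω → C) : ℝ :=
  condEnt p g k - condEnt p g (fun ω => (f ω, k ω))

/-- `p` is a probability mass function. -/
def IsPMF {Ω : Type*} [Fintype Ω] (p : Ω → ℝ) : Prop :=
  (∀ ω, 0 ≤ p ω) ∧ ∑ ω, p ω = 1

/-- Conditional independence of `f` and `g` given `k` under `p`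
(the Markov chain `f → k → g`). -/
def CondIndep {Ω A B C : Type*} [Fintype Ω] [DecidableEq A] [DecidableEq B] [DecidableEq C]
    (p : Ω → ℝ) (f : Ω → A) (g : Ω → B) (k : Ω → C) : Prop :=
  ∀ a b c, pmap p (fun ω => (f ω, g ω, k ω)) (a, b, c) * pmap p k c =
    pmap p (fun ω => (f ω, k ω)) (a, c) * pmap p (fun ω => (g ω, k ω)) (b, c)

/-- Independence of `f` and `g` under `p`. -/
def Indep {Ω A B : Type*} [Fintype Ω] [DecidableEq A] [DecidableEq B]
    (p : Ω → ℝ) (f : Ω → A) (g : Ω → B) : Prop :=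
  ∀ a b, pmap p (fun ω => (f ω, g ω)) (a, b) = pmap p f a * pmap p g b

/-! ### Auxiliary lemmas -/

set_option linter.unusedSectionVars false

lemma ent_eq_negMulLog {A : Type*} [Fintype A] (p : A → ℝ) :
    ent p = ∑ a, Real.negMulLog (p a) := by
  simp [ent, Real.negMulLog, neg_mul]

section PmapBasic
variable {Ω A B C : Type*} [Fintype Ω] [Fintype A] [Fintype B] [Fintype C]
  [DecidableEq A] [DecidableEq B] [DecidableEq C]

lemma pmap_nonneg (p : Ω → ℝ) (hp : ∀ ω, 0 ≤ p ω) (f : Ω → A) (a : A) : 0 ≤ pmap p f a := by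
  refine Finset.sum_nonneg fun ω _ => ?_
  split <;> simp [hp ω]

lemma sum_pmap (p : Ω → ℝ) (f : Ω → A) : ∑ a, pmap p f a = ∑ ω, p ω := by
  simp only [pmap]
  rw [Finset.sum_comm]
  simp

lemma pmap_pair_snd (p : Ω → ℝ) (f : Ω → A) (g : Ω → B) (b : B) :
    ∑ a, pmap p (fun ω => (f ω, g ω)) (a, b) = pmap p g b := by
  simp only [pmap]
  rw [Finset.sum_comm]
  refine Finset.sum_congr rfl fun ω _ => ?_
  by_cases h : g ω = b <;> simp [Prod.ext_iff, h]

lemma pmap_triple_mid (p : Ω → ℝ) (f : Ω → A) (g : Ω → B) (k : Ω → C) (a : A) (c : C) :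
    ∑ b, pmap p (fun ω => (f ω, g ω, k ω)) (a, b, c) = pmap p (fun ω => (f ω, k ω)) (a, c) := by
  simp only [pmap]
  rw [Finset.sum_comm]
  refine Finset.sum_congr rfl fun ω _ => ?_
  by_cases h1 : f ω = a <;> by_cases h2 : k ω = c <;> simp [Prod.ext_iff, h1, h2]

lemma pmap_triple_fst (p : Ω → ℝ) (f : Ω → A) (g : Ω → B) (k : Ω → C) (b : B) (c : C) :
    ∑ a, pmap p (fun ω => (f ω, g ω, k ω)) (a, b, c) = pmap p (fun ω => (g ω, k ω)) (b, c) := by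
  simp only [pmap]
  rw [Finset.sum_comm]
  refine Finset.sum_congr rfl fun ω _ => ?_
  by_cases h1 : g ω = b <;> by_cases h2 : k ω = c <;> simp [Prod.ext_iff, h1, h2]

lemma ent_pmap_equiv (p : Ω → ℝ) (f : Ω → A) (e : A ≃ B) :
    ent (pmap p (fun ω => e (f ω))) = ent (pmap p f) := by
  have hpm : ∀ a, pmap p (fun ω => e (f ω)) (e a) = pmap p f a := by
    intro a
    simp only [pmap]
    refine Finset.sum_congr rfl fun ω _ => ?_
    simp [e.apply_eq_iff_eq]
  unfold ent
  rw [← Equiv.sum_comp e (fun b => -(pmap p (fun ω => e (f ω)) b *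
    Real.log (pmap p (fun ω => e (f ω)) b)))]
  simp only [hpm]

lemma ent_pmap_swap (p : Ω → ℝ) (f : Ω → A) (g : Ω → B) :
    ent (pmap p (fun ω => (f ω, g ω))) = ent (pmap p (fun ω => (g ω, f ω))) := by
  have := ent_pmap_equiv p (fun ω => (g ω, f ω)) (Equiv.prodComm B A)
  simpa using this
end PmapBasic

section Abstract
variable {A B C : Type*} [Fintype A] [Fintype B] [Fintype C]

noncomputable def m13 (q : A × B × C → ℝ) : A × C → ℝ := fun ac => ∑ b, q (ac.1, b, ac.2)
noncomputable def m23 (q : A × B × C → ℝ) : B × C → ℝ := fun bc => ∑ a, q (a, bc.1, bc.2)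
noncomputable def m3 (q : A × B × C → ℝ) : C → ℝ := fun c => ∑ a, ∑ b, q (a, b, c)

lemma cmi_expand (q : A × B × C → ℝ) :
    ent (m13 q) + ent (m23 q) - ent q - ent (m3 q) =
      ∑ a, ∑ b, ∑ c, q (a, b, c) *
        (Real.log (q (a, b, c)) + Real.log (m3 q c)
          - Real.log (m13 q (a, c)) - Real.log (m23 q (b, c))) := by
  have h123 : ent q = ∑ a, ∑ b, ∑ c, -(q (a,b,c) * Real.log (q (a,b,c))) := by
    simp [ent, Fintype.sum_prod_type]
  have h13 : ent (m13 q) = ∑ a, ∑ b, ∑ c, -(q (a,b,c) * Real.log (m13 q (a,c))) := by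
    simp only [ent, Fintype.sum_prod_type, m13]
    refine Finset.sum_congr rfl fun a _ => ?_
    conv_rhs => rw [Finset.sum_comm]
    refine Finset.sum_congr rfl fun c _ => ?_
    symm
    rw [Finset.sum_neg_distrib, ← Finset.sum_mul]
  have h23 : ent (m23 q) = ∑ a, ∑ b, ∑ c, -(q (a,b,c) * Real.log (m23 q (b,c))) := by
    simp only [ent, Fintype.sum_prod_type, m23]
    symm
    refine Finset.sum_comm.trans (Finset.sum_congr rfl fun b _ => Finset.sum_comm.trans
      (Finset.sum_congr rfl fun c _ => ?_))
    rw [Finset.sum_neg_distrib, ← Finset.sum_mul]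
  have h3 : ent (m3 q) = ∑ a, ∑ b, ∑ c, -(q (a,b,c) * Real.log (m3 q c)) := by
    simp only [ent, m3]
    symm
    refine (Finset.sum_congr rfl fun a _ => Finset.sum_comm).trans (Finset.sum_comm.trans
      (Finset.sum_congr rfl fun c _ => ?_))
    simp only [Finset.sum_neg_distrib, ← Finset.sum_mul]
  rw [h123, h13, h23, h3]
  simp only [← Finset.sum_add_distrib, ← Finset.sum_sub_distrib]
  refine Finset.sum_congr rfl fun a _ => Finset.sum_congr rfl fun b _ =>
    Finset.sum_congr rfl fun c _ => by ring

lemma pos_marg (q : A × B × C → ℝ) (h0 : ∀ z, 0 ≤ q z) {a b c} (h : 0 < q (a,b,c)) :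
    0 < m13 q (a,c) ∧ 0 < m23 q (b,c) ∧ 0 < m3 q c := by
  have h13 : q (a,b,c) ≤ m13 q (a,c) :=
    Finset.single_le_sum (f := fun b => q (a,b,c)) (fun i _ => h0 _) (mem_univ b)
  have h23 : q (a,b,c) ≤ m23 q (b,c) :=
    Finset.single_le_sum (f := fun a => q (a,b,c)) (fun i _ => h0 _) (mem_univ a)
  have h3 : m13 q (a,c) ≤ m3 q c :=
    Finset.single_le_sum (f := fun a => ∑ b, q (a,b,c))
      (fun i _ => Finset.sum_nonneg fun _ _ => h0 _) (mem_univ a)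
  exact ⟨lt_of_lt_of_le h h13, lt_of_lt_of_le h h23, lt_of_lt_of_le (lt_of_lt_of_le h h13) h3⟩

lemma m3_nonneg (q : A × B × C → ℝ) (h0 : ∀ z, 0 ≤ q z) (c : C) : 0 ≤ m3 q c :=
  Finset.sum_nonneg fun _ _ => Finset.sum_nonneg fun _ _ => h0 _

lemma sum_m3 (q : A × B × C → ℝ) : ∑ c, m3 q c = ∑ z, q z := by
  simp only [m3, Fintype.sum_prod_type]
  rw [Finset.sum_comm]
  refine Finset.sum_congr rfl fun a _ => Finset.sum_comm

lemma markov_abs (q : A × B × C → ℝ) (h0 : ∀ z, 0 ≤ q z)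
    (hm : ∀ a b c, q (a,b,c) * m3 q c = m13 q (a,c) * m23 q (b,c)) :
    ∑ a, ∑ b, ∑ c, q (a, b, c) *
        (Real.log (q (a, b, c)) + Real.log (m3 q c)
          - Real.log (m13 q (a, c)) - Real.log (m23 q (b, c))) = 0 := by
  refine Finset.sum_eq_zero fun a _ => Finset.sum_eq_zero fun b _ =>
    Finset.sum_eq_zero fun c _ => ?_
  rcases eq_or_lt_of_le (h0 (a,b,c)) with h | h
  · rw [← h, zero_mul]
  · obtain ⟨p13, p23, p3⟩ := pos_marg q h0 h
    have hlog : Real.log (q (a,b,c)) + Real.log (m3 q c) =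
        Real.log (m13 q (a,c)) + Real.log (m23 q (b,c)) := by
      rw [← Real.log_mul (ne_of_gt h) (ne_of_gt p3),
        ← Real.log_mul (ne_of_gt p13) (ne_of_gt p23), hm]
    rw [hlog]; ring

lemma cmi_sum_nonneg (q : A × B × C → ℝ) (h0 : ∀ z, 0 ≤ q z) (h1 : ∑ z, q z = 1) :
    0 ≤ ∑ a, ∑ b, ∑ c, q (a, b, c) *
        (Real.log (q (a, b, c)) + Real.log (m3 q c)
          - Real.log (m13 q (a, c)) - Real.log (m23 q (b, c))) := by
  have key : ∀ a b c, (if 0 < q (a,b,c) then q (a,b,c) - m13 q (a,c) * m23 q (b,c) / m3 q c else 0)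
      ≤ q (a, b, c) * (Real.log (q (a, b, c)) + Real.log (m3 q c)
          - Real.log (m13 q (a, c)) - Real.log (m23 q (b, c))) := by
    intro a b c
    split_ifs with h
    · obtain ⟨p13, p23, p3⟩ := pos_marg q h0 h
      have hlog : Real.log (m13 q (a,c) * m23 q (b,c) / (q (a,b,c) * m3 q c)) ≤
          m13 q (a,c) * m23 q (b,c) / (q (a,b,c) * m3 q c) - 1 :=
        Real.log_le_sub_one_of_pos (by positivity)
      rw [Real.log_div (by positivity) (by positivity), Real.log_mul (ne_of_gt p13) (ne_of_gt p23),
        Real.log_mul (ne_of_gt h) (ne_of_gt p3)] at hlog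
      have h2 : q (a,b,c) * (m13 q (a,c) * m23 q (b,c) / (q (a,b,c) * m3 q c))
          = m13 q (a,c) * m23 q (b,c) / m3 q c := by
        field_simp
      nlinarith [hlog, h, h2]
    · rw [le_antisymm (not_lt.mp h) (h0 _)]; simp
  have inner : ∀ c, 0 < m3 q c →
      ∑ a, ∑ b, m13 q (a,c) * m23 q (b,c) / m3 q c = m3 q c := by
    intro c hc
    have hb : ∑ b, m23 q (b,c) = m3 q c := by
      simp only [m23, m3]; exact Finset.sum_comm
    calc ∑ a, ∑ b, m13 q (a,c) * m23 q (b,c) / m3 q c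
        = ∑ a, m13 q (a,c) * m3 q c / m3 q c := by
          refine Finset.sum_congr rfl fun a _ => ?_
          rw [← Finset.sum_div, ← Finset.mul_sum, hb]
      _ = ∑ a, m13 q (a,c) := Finset.sum_congr rfl fun a _ => by field_simp
      _ = m3 q c := rfl
  have step1 : ∑ a, ∑ b, ∑ c,
      (if 0 < q (a,b,c) then q (a,b,c) - m13 q (a,c) * m23 q (b,c) / m3 q c else 0) ≤
      ∑ a, ∑ b, ∑ c, q (a, b, c) *
        (Real.log (q (a, b, c)) + Real.log (m3 q c)
          - Real.log (m13 q (a, c)) - Real.log (m23 q (b, c))) :=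
    Finset.sum_le_sum fun a _ => Finset.sum_le_sum fun b _ =>
      Finset.sum_le_sum fun c _ => key a b c
  refine le_trans ?_ step1
  have hsplit : ∀ a b c,
      (if 0 < q (a,b,c) then q (a,b,c) - m13 q (a,c) * m23 q (b,c) / m3 q c else 0) =
      (if 0 < q (a,b,c) then q (a,b,c) else 0) -
        (if 0 < q (a,b,c) then m13 q (a,c) * m23 q (b,c) / m3 q c else 0) := by
    intro a b c; split_ifs <;> ring
  simp only [hsplit, Finset.sum_sub_distrib]
  have hS1 : ∑ a, ∑ b, ∑ c, (if 0 < q (a,b,c) then q (a,b,c) else 0) = 1 := by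
    rw [← h1, Fintype.sum_prod_type]
    refine Finset.sum_congr rfl fun a _ => ?_
    rw [Fintype.sum_prod_type]
    refine Finset.sum_congr rfl fun b _ => Finset.sum_congr rfl fun c _ => ?_
    split_ifs with h
    · rfl
    · exact (le_antisymm (not_lt.mp h) (h0 _)).symm
  have hS2 : ∑ a, ∑ b, ∑ c, (if 0 < q (a,b,c) then m13 q (a,c) * m23 q (b,c) / m3 q c else 0)
      ≤ 1 := by
    have mono : ∑ a, ∑ b, ∑ c, (if 0 < q (a,b,c) then m13 q (a,c) * m23 q (b,c) / m3 q c else 0)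
        ≤ ∑ a, ∑ b, ∑ c, (if 0 < m3 q c then m13 q (a,c) * m23 q (b,c) / m3 q c else 0) := by
      refine Finset.sum_le_sum fun a _ => Finset.sum_le_sum fun b _ =>
        Finset.sum_le_sum fun c _ => ?_
      split_ifs with h h2 h2
      · exact le_refl _
      · exact absurd (pos_marg q h0 h).2.2 h2
      · have h13 : 0 ≤ m13 q (a,c) := Finset.sum_nonneg fun _ _ => h0 _
        have h23 : 0 ≤ m23 q (b,c) := Finset.sum_nonneg fun _ _ => h0 _
        have h3 : 0 ≤ m3 q c := m3_nonneg q h0 c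
        positivity
      · exact le_refl _
    refine le_trans mono ?_
    have reorder : ∑ a, ∑ b, ∑ c, (if 0 < m3 q c then m13 q (a,c) * m23 q (b,c) / m3 q c else 0)
        = ∑ c, ∑ a, ∑ b, (if 0 < m3 q c then m13 q (a,c) * m23 q (b,c) / m3 q c else 0) := by
      refine (Finset.sum_congr rfl fun a _ => Finset.sum_comm).trans Finset.sum_comm
    rw [reorder]
    have percs : ∀ c, ∑ a, ∑ b, (if 0 < m3 q c then m13 q (a,c) * m23 q (b,c) / m3 q c else 0)
        = if 0 < m3 q c then m3 q c else 0 := by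
      intro c
      split_ifs with h
      · exact inner c h
      · simp
    simp only [percs]
    calc ∑ c, (if 0 < m3 q c then m3 q c else 0) ≤ ∑ c, m3 q c := by
          refine Finset.sum_le_sum fun c _ => ?_
          split_ifs
          · exact le_refl _
          · exact m3_nonneg q h0 c
      _ = 1 := by rw [sum_m3, h1]
  linarith
end Abstract

section Glue
variable {Ω A B C : Type*} [Fintype Ω] [Fintype A] [Fintype B] [Fintype C]
  [DecidableEq A] [DecidableEq B] [DecidableEq C]

lemma m13_pmap (p : Ω → ℝ) (f : Ω → A) (g : Ω → B) (k : Ω → C) :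
    m13 (pmap p (fun ω => (f ω, g ω, k ω))) = pmap p (fun ω => (f ω, k ω)) := by
  funext ac
  exact pmap_triple_mid p f g k ac.1 ac.2

lemma m23_pmap (p : Ω → ℝ) (f : Ω → A) (g : Ω → B) (k : Ω → C) :
    m23 (pmap p (fun ω => (f ω, g ω, k ω))) = pmap p (fun ω => (g ω, k ω)) := by
  funext bc
  exact pmap_triple_fst p f g k bc.1 bc.2

lemma m3_pmap (p : Ω → ℝ) (f : Ω → A) (g : Ω → B) (k : Ω → C) :
    m3 (pmap p (fun ω => (f ω, g ω, k ω))) = pmap p k := by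
  funext c
  show ∑ a, ∑ b, _ = _
  rw [Finset.sum_congr rfl fun a _ => pmap_triple_mid p f g k a c]
  exact pmap_pair_snd p f k c

lemma cmi_pmap (p : Ω → ℝ) (hp : IsPMF p) (f : Ω → A) (g : Ω → B) (k : Ω → C) :
    0 ≤ ent (pmap p (fun ω => (f ω, k ω))) + ent (pmap p (fun ω => (g ω, k ω)))
      - ent (pmap p (fun ω => (f ω, g ω, k ω))) - ent (pmap p k) := by
  rw [← m13_pmap p f g k, ← m23_pmap p f g k, ← m3_pmap p f g k, cmi_expand]
  exact cmi_sum_nonneg _ (fun z => pmap_nonneg p hp.1 _ z) (by rw [sum_pmap, hp.2])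

lemma markov_pmap (p : Ω → ℝ) (hp : IsPMF p) (f : Ω → A) (g : Ω → B) (k : Ω → C)
    (hm : CondIndep p f g k) :
    ent (pmap p (fun ω => (f ω, k ω))) + ent (pmap p (fun ω => (g ω, k ω)))
      - ent (pmap p (fun ω => (f ω, g ω, k ω))) - ent (pmap p k) = 0 := by
  rw [← m13_pmap p f g k, ← m23_pmap p f g k, ← m3_pmap p f g k, cmi_expand]
  refine markov_abs _ (fun z => pmap_nonneg p hp.1 _ z) fun a b c => ?_
  rw [m13_pmap, m23_pmap, m3_pmap]
  exact hm a b c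

lemma ent_indep (p : Ω → ℝ) (hp : IsPMF p) (f : Ω → A) (g : Ω → B) (h : Indep p f g) :
    ent (pmap p (fun ω => (f ω, g ω))) = ent (pmap p f) + ent (pmap p g) := by
  have hf1 : ∑ a, pmap p f a = 1 := by rw [sum_pmap, hp.2]
  have hg1 : ∑ b, pmap p g b = 1 := by rw [sum_pmap, hp.2]
  have key : ent (pmap p (fun ω => (f ω, g ω))) =
      ∑ a, ∑ b, Real.negMulLog (pmap p f a * pmap p g b) := by
    rw [ent_eq_negMulLog, Fintype.sum_prod_type]
    exact Finset.sum_congr rfl fun a _ => Finset.sum_congr rfl fun b _ => by rw [h a b]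
  rw [key]
  simp only [Real.negMulLog_mul, Finset.sum_add_distrib]
  rw [ent_eq_negMulLog, ent_eq_negMulLog]
  congr 1
  · refine Finset.sum_congr rfl fun a _ => ?_
    rw [← Finset.sum_mul, hg1, one_mul]
  · rw [Finset.sum_comm]
    refine Finset.sum_congr rfl fun b _ => ?_
    rw [← Finset.sum_mul, hf1, one_mul]
end Glue

/-- If `(y, r) → x → h` is a Markov chain and `r ⟂ y`, then
`I(h; r) ≤ I(h; x) − I(h; y)`. -/
theorem stmt3 {Y R X H : Type*} [Fintype Y] [Fintype R] [Fintype X] [Fintype H]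
    [DecidableEq Y] [DecidableEq R] [DecidableEq X] [DecidableEq H]
    (p : Y × R × X × H → ℝ) (hp : IsPMF p)
    (hmarkov : CondIndep p (fun ω => ω.2.2.2) (fun ω => (ω.1, ω.2.1)) (fun ω => ω.2.2.1))
    (hindep : Indep p (fun ω => ω.2.1) (fun ω => ω.1)) :
    MI p (fun ω => ω.2.2.2) (fun ω => ω.2.1) ≤
      MI p (fun ω => ω.2.2.2) (fun ω => ω.2.2.1) -
        MI p (fun ω => ω.2.2.2) (fun ω => ω.1) := by
  have P1 : 0 ≤ ent (pmap p (fun ω => (ω.2.2.2, (ω.1, ω.2.1))))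
      + ent (pmap p (fun ω => (ω.2.2.1, (ω.1, ω.2.1))))
      - ent (pmap p (fun ω => (ω.2.2.2, ω.2.2.1, (ω.1, ω.2.1))))
      - ent (pmap p (fun ω => (ω.1, ω.2.1))) :=
    cmi_pmap p hp (fun ω => ω.2.2.2) (fun ω => ω.2.2.1) (fun ω => (ω.1, ω.2.1))
  have P2 : 0 ≤ ent (pmap p (fun ω => (ω.1, ω.2.2.2)))
      + ent (pmap p (fun ω => (ω.2.1, ω.2.2.2)))
      - ent (pmap p (fun ω => (ω.1, ω.2.1, ω.2.2.2)))
      - ent (pmap p (fun ω => ω.2.2.2)) :=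
    cmi_pmap p hp (fun ω => ω.1) (fun ω => ω.2.1) (fun ω => ω.2.2.2)
  have P3 : ent (pmap p (fun ω => (ω.2.2.2, ω.2.2.1)))
      + ent (pmap p (fun ω => ((ω.1, ω.2.1), ω.2.2.1)))
      - ent (pmap p (fun ω => (ω.2.2.2, (ω.1, ω.2.1), ω.2.2.1)))
      - ent (pmap p (fun ω => ω.2.2.1)) = 0 :=
    markov_pmap p hp (fun ω => ω.2.2.2) (fun ω => (ω.1, ω.2.1)) (fun ω => ω.2.2.1) hmarkov
  have P4 : ent (pmap p (fun ω => (ω.2.1, ω.1)))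
      = ent (pmap p (fun ω => ω.2.1)) + ent (pmap p (fun ω => ω.1)) :=
    ent_indep p hp (fun ω => ω.2.1) (fun ω => ω.1) hindep
  -- reordering equivalences
  have E1 : ent (pmap p (fun ω => (ω.2.2.2, ω.2.2.1, (ω.1, ω.2.1))))
      = ent (pmap p (fun ω => (ω.2.2.2, (ω.1, ω.2.1), ω.2.2.1))) :=
    ent_pmap_equiv p (fun ω => (ω.2.2.2, (ω.1, ω.2.1), ω.2.2.1))
      ⟨fun z => (z.1, z.2.2, z.2.1), fun z => (z.1, z.2.2, z.2.1),
        fun z => rfl, fun z => rfl⟩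
  have E2 : ent (pmap p (fun ω => (ω.2.2.1, (ω.1, ω.2.1))))
      = ent (pmap p (fun ω => ((ω.1, ω.2.1), ω.2.2.1))) :=
    ent_pmap_swap p (fun ω => ω.2.2.1) (fun ω => (ω.1, ω.2.1))
  have E3 : ent (pmap p (fun ω => (ω.2.2.2, (ω.1, ω.2.1))))
      = ent (pmap p (fun ω => (ω.1, ω.2.1, ω.2.2.2))) :=
    (ent_pmap_equiv p (fun ω => (ω.2.2.2, (ω.1, ω.2.1)))
      (⟨fun z => (z.2.1, z.2.2, z.1), fun z => (z.2.2, z.1, z.2.1),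
        fun z => rfl, fun z => rfl⟩ : (H × Y × R) ≃ (Y × R × H))).symm
  have E4 : ent (pmap p (fun ω => (ω.1, ω.2.2.2)))
      = ent (pmap p (fun ω => (ω.2.2.2, ω.1))) :=
    ent_pmap_swap p (fun ω => ω.1) (fun ω => ω.2.2.2)
  have E5 : ent (pmap p (fun ω => (ω.2.1, ω.2.2.2)))
      = ent (pmap p (fun ω => (ω.2.2.2, ω.2.1))) :=
    ent_pmap_swap p (fun ω => ω.2.1) (fun ω => ω.2.2.2)
  have E6 : ent (pmap p (fun ω => (ω.1, ω.2.1)))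
      = ent (pmap p (fun ω => (ω.2.1, ω.1))) :=
    ent_pmap_swap p (fun ω => ω.1) (fun ω => ω.2.1)
  simp only [MI]
  linarith [P1, P2, P3, P4, E1, E2, E3, E4, E5, E6]
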